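/- arXiv:1608.04440 — 7 statements merged into one kernel-verified Lean document; each statement's English description precedes it below -/
import Mathlib

section
/- Let G be holomorphic on ℂ \ (-∞,0], mapping the upper half-plane into its closed upper half-plane, positive on (0,∞), and let A, A₀ ≥ 0 with A² + A₀² > 0. Then the function z ↦ e^{Az + A₀/z}·G(z) does not map the upper half-plane into itself: there exists z₀ with Im z₀ > 0 such that e^{A z₀ + A₀/z₀}·G(z₀) is a negative real number. -/
open Complex Set Topology

/-- Multiplying an S-function G by a nontrivial exponential factor
e^{Az + A₀/z} (A, A₀ ≥ 0, not both zero) destroys the half-plane mapping property: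
the product takes a negative real value at some point of the upper half-plane. -/
theorem stmt_5 (G : ℂ → ℂ) (D : Set ℂ)
    (hD : D = {z : ℂ | ¬ (z.im = 0 ∧ z.re ≤ 0)})
    (hG : DifferentiableOn ℂ G D)
    (him : ∀ z ∈ D, 0 ≤ z.im * (G z).im)
    (hpos : ∀ x : ℝ, 0 < x → (G (x : ℂ)).im = 0 ∧ 0 < (G (x : ℂ)).re)
    (A A₀ : ℝ) (hA : 0 ≤ A) (hA₀ : 0 ≤ A₀) (hAA : 0 < A ^ 2 + A₀ ^ 2) :
    ∃ z₀ : ℂ, 0 < z₀.im ∧ ∃ c : ℝ, c < 0 ∧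
      Complex.exp ((A : ℂ) * z₀ + (A₀ : ℂ) / z₀) * G z₀ = (c : ℂ) := by
  subst hD
  set D : Set ℂ := {z : ℂ | ¬ (z.im = 0 ∧ z.re ≤ 0)} with hDdef
  have hDopen : IsOpen D := by
    rw [hDdef]
    have : {z : ℂ | ¬ (z.im = 0 ∧ z.re ≤ 0)} = ({z : ℂ | z.im = 0} ∩ {z : ℂ | z.re ≤ 0})ᶜ := by
      ext z; simp [Set.mem_inter_iff, not_and]
    rw [this]
    exact (((isClosed_eq continuous_im continuous_const)).inter
      (isClosed_le continuous_re continuous_const)).isOpen_compl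
  set U : Set ℂ := {z : ℂ | 0 < z.im} with hUdef
  have hUopen : IsOpen U := isOpen_lt continuous_const continuous_im
  have hUD : U ⊆ D := by
    intro z hz
    simp only [hUdef, Set.mem_setOf_eq] at hz
    simp only [hDdef, Set.mem_setOf_eq]
    rintro ⟨h1, _⟩; rw [h1] at hz; exact lt_irrefl 0 hz
  have hAn : AnalyticOnNhd ℂ G U := (hG.mono hUD).analyticOnNhd hUopen
  have himU : ∀ z ∈ U, 0 ≤ (G z).im := by
    intro z hz
    have h0 := him z (hUD hz)
    have hz' : 0 < z.im := hz
    nlinarith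
  -- key: G z is in the slit plane on U
  have key : ∀ z ∈ U, G z ∈ slitPlane := by
    rcases hAn.is_constant_or_isOpen (convex_halfSpace_im_gt 0).isPreconnected with ⟨w, hw⟩ | hopen
    · -- constant case: w = G 1
      have h1D : (1 : ℂ) ∈ D := by simp [hDdef]
      have h1cl : (1 : ℂ) ∈ closure U := by
        rw [hUdef, Complex.closure_setOf_lt_im]
        simp
      have hne : (𝓝[U] (1 : ℂ)).NeBot := mem_closure_iff_nhdsWithin_neBot.mp h1cl
      have ht1 : Filter.Tendsto G (𝓝[U] (1 : ℂ)) (𝓝 (G 1)) :=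
        ((hG.continuousOn 1 h1D).mono_left (nhdsWithin_mono _ hUD))
      have ht2 : Filter.Tendsto G (𝓝[U] (1 : ℂ)) (𝓝 w) := by
        refine Filter.Tendsto.congr' ?_ tendsto_const_nhds
        filter_upwards [self_mem_nhdsWithin] with z hz using (hw z hz).symm
      have hGw : G 1 = w := tendsto_nhds_unique ht1 ht2
      intro z hz
      rw [hw z hz, ← hGw]
      left
      have := (hpos 1 one_pos).2
      rwa [Complex.ofReal_one] at this
    · -- open case: im (G z) > 0 on U
      have hVopen : IsOpen (G '' U) := hopen U (le_refl U) hUopen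
      intro z hz
      right
      intro him0
      obtain ⟨ε, hε, hball⟩ := Metric.isOpen_iff.mp hVopen (G z) ⟨z, hz, rfl⟩
      have hmem : G z - (ε/2 : ℝ) * I ∈ Metric.ball (G z) ε := by
        simp only [Metric.mem_ball, dist_eq]
        have : G z - (ε/2 : ℝ) * I - G z = -((ε/2 : ℝ) * I) := by ring
        rw [this]
        simp only [norm_neg, norm_mul, Complex.norm_real, Real.norm_eq_abs,
          Complex.norm_I, mul_one]
        rw [_root_.abs_of_nonneg (half_pos hε).le]
        linarith
      obtain ⟨z', hz', heq⟩ := hball hmem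
      have := himU z' hz'
      rw [heq] at this
      simp only [Complex.sub_im, Complex.mul_im, Complex.ofReal_re, Complex.I_im,
        Complex.ofReal_im, Complex.I_re, mul_one, mul_zero, add_zero, him0] at this
      linarith
  -- choose T, y₁, y₂
  obtain ⟨T, y₁, y₂, hy₁, h12, hfy₁, hfy₂, hT⟩ :
      ∃ T y₁ y₂ : ℝ, 0 < y₁ ∧ y₁ ≤ y₂ ∧ A * y₁ - A₀ / y₁ ≤ T - Real.pi ∧
        T ≤ A * y₂ - A₀ / y₂ ∧ Complex.exp ((T : ℝ) * I) = -1 := by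
    have hpi := Real.pi_pos
    have h3 : Complex.exp (((3 * Real.pi : ℝ) : ℂ) * I) = -1 := by
      push_cast
      have : (3 * (Real.pi : ℂ)) * I = Real.pi * I + 2 * Real.pi * I := by ring
      rw [this, Complex.exp_add, Complex.exp_pi_mul_I, Complex.exp_two_pi_mul_I]
      norm_num
    rcases hA.lt_or_eq with hApos | hA0
    · -- A > 0
      refine ⟨3 * Real.pi, min (max 1 ((3 * Real.pi + A₀) / A)) (2 * Real.pi / A),
        max 1 ((3 * Real.pi + A₀) / A), ?_, min_le_left _ _, ?_, ?_, h3⟩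
      · exact lt_min (lt_of_lt_of_le one_pos (le_max_left _ _)) (by positivity)
      · set y₁ := min (max 1 ((3 * Real.pi + A₀) / A)) (2 * Real.pi / A) with hy1def
        have hy1pos : 0 < y₁ :=
          lt_min (lt_of_lt_of_le one_pos (le_max_left _ _)) (by positivity)
        have h1 : A * y₁ ≤ 2 * Real.pi := by
          have := min_le_right (max 1 ((3 * Real.pi + A₀) / A)) (2 * Real.pi / A)
          calc A * y₁ ≤ A * (2 * Real.pi / A) := by
                exact mul_le_mul_of_nonneg_left this hA
            _ = 2 * Real.pi := by field_simp
        have h2 : 0 ≤ A₀ / y₁ := by positivity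
        linarith
      · set y₂ := max 1 ((3 * Real.pi + A₀) / A) with hy2def
        have h1 : (1 : ℝ) ≤ y₂ := le_max_left _ _
        have h2 : (3 * Real.pi + A₀) / A ≤ y₂ := le_max_right _ _
        have h3' : 3 * Real.pi + A₀ ≤ A * y₂ := by
          rw [div_le_iff₀ hApos] at h2; linarith [h2]
        have h4 : A₀ / y₂ ≤ A₀ := div_le_self hA₀ h1
        linarith
    · -- A = 0
      have hA0' : A = 0 := hA0.symm
      have hA₀pos : 0 < A₀ := by
        rcases hA₀.lt_or_eq with h | h
        · exact h
        · exfalso; rw [hA0', ← h] at hAA; norm_num at hAA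
      refine ⟨-(3 * Real.pi), A₀ / (4 * Real.pi), A₀ / (3 * Real.pi), by positivity,
        ?_, ?_, ?_, ?_⟩
      · gcongr
        linarith
      · rw [hA0']
        have : A₀ / (A₀ / (4 * Real.pi)) = 4 * Real.pi := by
          field_simp
        rw [this]
        ring_nf
        linarith
      · rw [hA0']
        have : A₀ / (A₀ / (3 * Real.pi)) = 3 * Real.pi := by
          field_simp
        rw [this]
        ring_nf
        linarith
      · have : ((-(3 * Real.pi) : ℝ) : ℂ) * I = -(((3 * Real.pi : ℝ) : ℂ) * I) := by
          push_cast; ring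
        rw [this, Complex.exp_neg, h3]
        norm_num
  -- the path and IVT
  set f : ℝ → ℝ := fun y => A * y - A₀ / y with hfdef
  set θ : ℝ → ℝ := fun y => f y + arg (G ((y : ℝ) * I)) with hθdef
  have hmemU : ∀ y : ℝ, y ∈ Icc y₁ y₂ → ((y : ℂ) * I) ∈ U := by
    intro y hy
    have : (0 : ℝ) < y := lt_of_lt_of_le hy₁ hy.1
    simp only [hUdef, Set.mem_setOf_eq, Complex.mul_im, Complex.ofReal_re, Complex.I_im,
      Complex.ofReal_im, Complex.I_re, mul_one, mul_zero, add_zero]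
    exact this
  have θcont : ContinuousOn θ (Icc y₁ y₂) := by
    apply ContinuousOn.add
    · apply ContinuousOn.sub
      · exact (continuous_const.mul continuous_id).continuousOn
      · exact ContinuousOn.div continuousOn_const continuousOn_id
          (fun y hy => ne_of_gt (lt_of_lt_of_le hy₁ hy.1))
    · intro y hy
      apply ContinuousAt.continuousWithinAt
      have hcg : ContinuousAt G ((y : ℂ) * I) :=
        (hG.continuousOn.continuousAt (hDopen.mem_nhds (hUD (hmemU y hy))))
      have harg : ContinuousAt arg (G ((y : ℂ) * I)) :=
        Complex.continuousAt_arg (key _ (hmemU y hy))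
      have hinner : ContinuousAt (fun y : ℝ => (y : ℂ) * I) y :=
        (Complex.continuous_ofReal.mul continuous_const).continuousAt
      show ContinuousAt (arg ∘ G ∘ (fun y : ℝ => (y : ℂ) * I)) y
      exact ContinuousAt.comp (g := arg) (f := G ∘ fun y : ℝ => (y : ℂ) * I) (x := y) harg
        (ContinuousAt.comp (g := G) (f := fun y : ℝ => (y : ℂ) * I) (x := y) hcg hinner)
  have hθ1 : θ y₁ ≤ T := by
    have h := Complex.arg_le_pi (G ((y₁ : ℂ) * I))
    simp only [hθdef, hfdef]
    linarith
  have hθ2 : T ≤ θ y₂ := by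
    have hy2mem : (y₂ : ℝ) ∈ Icc y₁ y₂ := ⟨h12, le_refl _⟩
    have h := Complex.arg_nonneg_iff.mpr (himU _ (hmemU y₂ hy2mem))
    simp only [hθdef, hfdef]
    linarith
  obtain ⟨y₀, hy₀mem, hy₀⟩ := intermediate_value_Icc h12 θcont ⟨hθ1, hθ2⟩
  have hy₀pos : 0 < y₀ := lt_of_lt_of_le hy₁ hy₀mem.1
  set z₀ : ℂ := (y₀ : ℂ) * I with hz₀def
  have hz₀U : z₀ ∈ U := hmemU y₀ hy₀mem
  have hGne : G z₀ ≠ 0 := Complex.slitPlane_ne_zero (key _ hz₀U)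
  refine ⟨z₀, ?_, -(‖G z₀‖), ?_, ?_⟩
  · simp only [hz₀def, Complex.mul_im, Complex.ofReal_re, Complex.I_im, Complex.ofReal_im,
      Complex.I_re, mul_one, mul_zero, add_zero]
    exact hy₀pos
  · simpa using norm_pos_iff.mpr hGne
  · have hy0ne : (y₀ : ℂ) ≠ 0 := by
      simpa using ne_of_gt hy₀pos
    have hexp : (A : ℂ) * z₀ + (A₀ : ℂ) / z₀ = ((f y₀ : ℝ) : ℂ) * I := by
      rw [hz₀def, hfdef]
      have : (A₀ : ℂ) / ((y₀ : ℂ) * I) = -((A₀ : ℂ) / (y₀ : ℂ)) * I := by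
        rw [div_mul_eq_div_div, div_eq_mul_inv _ I, Complex.inv_I]
        ring
      rw [this]
      push_cast
      ring
    have harg : arg (G z₀) = T - f y₀ := by
      have : f y₀ + arg (G ((y₀ : ℂ) * I)) = T := hy₀
      rw [hz₀def]; linarith
    calc Complex.exp ((A : ℂ) * z₀ + (A₀ : ℂ) / z₀) * G z₀
        = Complex.exp (((f y₀ : ℝ) : ℂ) * I) *
            ((‖G z₀‖ : ℂ) * Complex.exp ((arg (G z₀) : ℂ) * I)) := by
          rw [hexp, Complex.norm_mul_exp_arg_mul_I]
      _ = (‖G z₀‖ : ℂ) * Complex.exp (((f y₀ + arg (G z₀) : ℝ) : ℂ) * I) := by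
          push_cast
          rw [add_mul, Complex.exp_add]
          ring
      _ = (‖G z₀‖ : ℂ) * Complex.exp ((T : ℂ) * I) := by
          rw [harg]
          norm_num
      _ = ((-(‖G z₀‖) : ℝ) : ℂ) := by
          rw [hT]
          push_cast
          ring
end

section
/- Let (a_k)_{k∈ℤ} be a sequence of positive reals and C > 0 a constant satisfying −a_{n+1} C² + 2 a_n C − a_{n−1} ≥ 0 for every n ∈ ℤ. Then for each n, (C − a_n/a_{n+1})² ≤ (a_n/a_{n+1} − a_{n−1}/a_n)·(a_n/a_{n+1}). In particular, if the monotone ratios r_n := a_{n−1}/a_n satisfy r_n → r as n → −∞ and r_n → R as n → +∞ with r, R finite, then r = C = R. -/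
open Filter Topology

/-- For a positive sequence (a_k) and C > 0 with
−a_{n+1}C² + 2a_n C − a_{n−1} ≥ 0 for all n, the completed square estimate
(C − a_n/a_{n+1})² ≤ (a_n/a_{n+1} − a_{n−1}/a_n)·(a_n/a_{n+1}) holds; and if
the ratios a_{n−1}/a_n converge to r as n → −∞ and to R as n → +∞, then r = C = R. -/
theorem stmt_9 (a : ℤ → ℝ) (hpos : ∀ k : ℤ, 0 < a k)
    (C : ℝ) (hC : 0 < C)
    (hineq : ∀ n : ℤ, 0 ≤ -(a (n + 1)) * C ^ 2 + 2 * a n * C - a (n - 1)) :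
    (∀ n : ℤ, (C - a n / a (n + 1)) ^ 2
        ≤ (a n / a (n + 1) - a (n - 1) / a n) * (a n / a (n + 1))) ∧
    (∀ r R : ℝ,
      Tendsto (fun n : ℤ => a (n - 1) / a n) atBot (𝓝 r) →
      Tendsto (fun n : ℤ => a (n - 1) / a n) atTop (𝓝 R) →
      r = C ∧ C = R) := by
  have key : ∀ n : ℤ, (C - a n / a (n + 1)) ^ 2
      ≤ (a n / a (n + 1) - a (n - 1) / a n) * (a n / a (n + 1)) := by
    intro n
    have h1 := hpos (n + 1)
    have h2 := hpos n
    have h := hineq n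
    have e : (a n / a (n + 1) - a (n - 1) / a n) * (a n / a (n + 1))
        - (C - a n / a (n + 1)) ^ 2
        = (-(a (n + 1)) * C ^ 2 + 2 * a n * C - a (n - 1)) / a (n + 1) := by
      field_simp
      ring
    have hq : 0 ≤ (-(a (n + 1)) * C ^ 2 + 2 * a n * C - a (n - 1)) / a (n + 1) :=
      div_nonneg h h1.le
    linarith [e]
  refine ⟨key, ?_⟩
  intro r R hr hR
  -- the shifted sequence
  have hfeq : (fun n : ℤ => a n / a (n + 1))
      = (fun n : ℤ => a (n - 1) / a n) ∘ (fun n : ℤ => n + 1) := by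
    funext n
    simp [Function.comp]
  have hfR : Tendsto (fun n : ℤ => a n / a (n + 1)) atTop (𝓝 R) := by
    rw [hfeq]
    exact hR.comp (tendsto_atTop_add_const_right atTop (1 : ℤ) tendsto_id)
  have hfr : Tendsto (fun n : ℤ => a n / a (n + 1)) atBot (𝓝 r) := by
    rw [hfeq]
    exact hr.comp (tendsto_atBot_add_const_right atBot (1 : ℤ) tendsto_id)
  have sqzero : ∀ (L : ℝ) (l : Filter ℤ) [l.NeBot],
      Tendsto (fun n : ℤ => a n / a (n + 1)) l (𝓝 L) →
      Tendsto (fun n : ℤ => a (n - 1) / a n) l (𝓝 L) → C = L := by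
    intro L l _ hf hg
    have hlhs : Tendsto (fun n : ℤ => (C - a n / a (n + 1)) ^ 2) l (𝓝 ((C - L) ^ 2)) :=
      ((tendsto_const_nhds.sub hf).pow 2)
    have hrhs : Tendsto
        (fun n : ℤ => (a n / a (n + 1) - a (n - 1) / a n) * (a n / a (n + 1)))
        l (𝓝 ((L - L) * L)) := (hf.sub hg).mul hf
    have hle : (C - L) ^ 2 ≤ (L - L) * L :=
      le_of_tendsto_of_tendsto' hlhs hrhs key
    have : (C - L) ^ 2 = 0 := le_antisymm (by linarith [hle]) (sq_nonneg _)
    have := pow_eq_zero_iff (n := 2) (by norm_num) |>.mp this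
    linarith [this]
  exact ⟨(sqzero r atBot hfr hr).symm, sqzero R atTop hfR hR⟩
end

section
/- Let (a_k), (b_k) be real doubly infinite sequences and A, B ≥ 0. Define the Hurwitz-type matrix H(p,q) with rows alternately (…, a_{k}, a_{k+1}, …) and (…, b_k, b_{k+1}, …) as in the paper (entry in row 2i−1, column j is a_{j−i+const}, in row 2i is b_{j−i+const}), and define c_k := A·a_k + B·b_k. Then the Toeplitz matrix T(c) with entries T(c)_{ij} = c_{j−i} factors as T(c) = Hᵀ(A,B)·H(p,q), where Hᵀ(A,B) is the matrix with (Hᵀ(A,B))_{ij} = A if j = 2i−1, B if j = 2i, 0 otherwise. Consequently, if H(p,q) is totally nonnegative then T(A p + B q) is totally nonnegative for all A, B ≥ 0. -/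
/-- A doubly infinite matrix is totally nonnegative if every finite square
submatrix taken with increasing rows and columns has nonnegative determinant. -/
def TotallyNonneg (H : ℤ → ℤ → ℝ) : Prop :=
  ∀ (k : ℕ) (r c : Fin k → ℤ), StrictMono r → StrictMono c →
    0 ≤ (Matrix.of fun i j => H (r i) (c j)).det

/-- The Hurwitz-type matrix H(p,q): row 2i−1 carries a_{j−i+1}, row 2i carries
b_{j−i+1}. -/
noncomputable def HurwitzMatrix (a b : ℤ → ℝ) : ℤ → ℤ → ℝ :=
  fun i j => if i % 2 = 1 then a (j - (i + 1) / 2 + 1) else b (j - i / 2 + 1)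

/-- T(Ap+Bq) = Hᵀ(A,B)·H(p,q) entrywise (the infinite product has
only the two terms k = 2i−1, 2i, where Hᵀ(A,B) has entries A and B), and
consequently total nonnegativity of H(p,q) implies that of T(Ap+Bq). -/
theorem stmt_11 (a b : ℤ → ℝ) (A B : ℝ) (hA : 0 ≤ A) (hB : 0 ≤ B)
    (c : ℤ → ℝ) (hc : ∀ k : ℤ, c k = A * a k + B * b k)
    (Tc : ℤ → ℤ → ℝ) (hTc : ∀ i j : ℤ, Tc i j = c (j - i + 1)) :
    (∀ i j : ℤ, Tc i j
        = A * HurwitzMatrix a b (2 * i - 1) j + B * HurwitzMatrix a b (2 * i) j) ∧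
    (TotallyNonneg (HurwitzMatrix a b) → TotallyNonneg Tc) := by
  classical
  have hprod : ∀ i j : ℤ, Tc i j
      = A * HurwitzMatrix a b (2 * i - 1) j + B * HurwitzMatrix a b (2 * i) j := by
    intro i j
    have e1 : (2 * i - 1) % 2 = 1 := by omega
    have e2 : (2 * i) % 2 ≠ 1 := by omega
    have e3 : (2 * i - 1 + 1) / 2 = i := by omega
    have e4 : (2 * i) / 2 = i := by omega
    rw [hTc, hc]
    simp [HurwitzMatrix, e1, e2, e3, e4]
  refine ⟨hprod, ?_⟩
  intro hH k r cc hr hcc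
  -- row index selector
  set ρ : Fin k → Bool → ℤ := fun i s => if s then 2 * r i - 1 else 2 * r i with hρ
  set coef : Bool → ℝ := fun s => if s then A else B with hcoef
  set g : Fin k → Bool → (Fin k → ℝ) := fun i s =>
    coef s • fun j => HurwitzMatrix a b (ρ i s) (cc j) with hg
  have hM : (Matrix.of fun i j => Tc (r i) (cc j))
      = fun i => ∑ s : Bool, g i s := by
    funext i j
    simp only [Matrix.of_apply, Fintype.sum_bool, hg, hρ, hcoef]
    simpa using hprod (r i) (cc j)
  have hdet : (Matrix.of fun i j => Tc (r i) (cc j)).det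
      = Matrix.detRowAlternating (fun i => ∑ s : Bool, g i s) := by
    rw [← hM]
    rfl
  rw [hdet]
  have hs : Matrix.detRowAlternating (R := ℝ) (n := Fin k) (fun i => ∑ s : Bool, g i s)
      = ∑ ε : Fin k → Bool,
          (Matrix.detRowAlternating (R := ℝ) (n := Fin k)).toMultilinearMap
            (fun i => g i (ε i)) :=
    (Matrix.detRowAlternating (R := ℝ) (n := Fin k)).toMultilinearMap.map_sum g
  rw [hs]
  apply Finset.sum_nonneg
  intro ε _
  have hterm : (Matrix.detRowAlternating (R := ℝ) (n := Fin k)).toMultilinearMap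
        (fun i => g i (ε i))
      = (∏ i, coef (ε i)) •
        (Matrix.detRowAlternating (R := ℝ) (n := Fin k)).toMultilinearMap
          (fun i => fun j => HurwitzMatrix a b (ρ i (ε i)) (cc j)) := by
    exact (Matrix.detRowAlternating (R := ℝ) (n := Fin k)).toMultilinearMap.map_smul_univ
      (fun i => coef (ε i)) (fun i => fun j => HurwitzMatrix a b (ρ i (ε i)) (cc j))
  rw [hterm]
  have hcoefnn : 0 ≤ ∏ i, coef (ε i) := by
    apply Finset.prod_nonneg
    intro i _
    simp only [hcoef]
    split <;> assumption
  have hmono : StrictMono fun i => ρ i (ε i) := by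
    intro i j hij
    have := hr hij
    simp only [hρ]
    split <;> split <;> omega
  have := hH k (fun i => ρ i (ε i)) cc hmono hcc
  have hdet2 : (Matrix.detRowAlternating (R := ℝ) (n := Fin k)).toMultilinearMap
      (fun i => fun j => HurwitzMatrix a b (ρ i (ε i)) (cc j))
      = (Matrix.of fun i j => HurwitzMatrix a b (ρ i (ε i)) (cc j)).det := rfl
  rw [hdet2]
  exact mul_nonneg hcoefnn this
end

section
/- Let p and q be functions holomorphic and nonvanishing on an annulus minus the nonpositive reals, such that F(z) = q(z)/p(z) and G(z) = z·p(z)/q(z) both map the open upper half-plane into its closure and are positive on (0,∞), with p, q real functions. Then the function w(z) := z·p(z²)/q(z²) maps the open right half-plane {Re z > 0} into its closure: for 0 ≤ arg z < π/2 one has −π < arg(p(z²)/q(z²)) ≤ 0 and 0 ≤ arg(z²p(z²)/q(z²)) < π, and hence −π/2 < arg w(z) < π/2 whenever w(z) ≠ 0, i.e. Re w(z) ≥ 0. -/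
open Complex

lemma krein_kac_key (p q : ℂ → ℂ) (D : Set ℂ)
    (hD : D = {z : ℂ | ¬ (z.im = 0 ∧ z.re ≤ 0)})
    (hp : ∀ z ∈ D, p z ≠ 0) (hq : ∀ z ∈ D, q z ≠ 0)
    (hF : ∀ z : ℂ, 0 < z.im → 0 ≤ (q z / p z).im)
    (hG : ∀ z : ℂ, 0 < z.im → 0 ≤ (z * p z / q z).im)
    (hGpos : ∀ x : ℝ, 0 < x → ((x : ℂ) * p (x : ℂ) / q (x : ℂ)).im = 0 ∧
      0 < ((x : ℂ) * p (x : ℂ) / q (x : ℂ)).re)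
    (z : ℂ) (hx : 0 < z.re) (hy : 0 ≤ z.im) :
    0 ≤ (z * p (z ^ 2) / q (z ^ 2)).re := by
  rcases eq_or_lt_of_le hy with h0 | hy'
  · -- z is real positive
    set x := z.re with hxdef
    have hzx : z = (x : ℂ) := by
      apply Complex.ext <;> simp [← h0, hxdef]
    have hz2 : z ^ 2 = ((x ^ 2 : ℝ) : ℂ) := by rw [hzx]; push_cast; ring
    obtain ⟨him, hre⟩ := hGpos (x ^ 2) (by positivity)
    have hx0 : (x : ℂ) ≠ 0 := by
      exact_mod_cast (ne_of_gt hx)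
    have hleft : z * p (z ^ 2) / q (z ^ 2)
        = (((x ^ 2 : ℝ) : ℂ) * p ((x ^ 2 : ℝ) : ℂ) / q ((x ^ 2 : ℝ) : ℂ)) * ((x : ℂ))⁻¹ := by
      rw [hz2, hzx, div_mul_eq_mul_div]
      congr 1
      push_cast
      field_simp
    rw [hleft, show ((x : ℂ))⁻¹ = ((x⁻¹ : ℝ) : ℂ) from (Complex.ofReal_inv x).symm,
      Complex.mul_re]
    simp only [Complex.ofReal_re, Complex.ofReal_im, him, mul_zero, sub_zero, zero_mul]
    positivity
  · -- z in the open upper half plane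
    set w := z ^ 2 with hw
    have hwim : 0 < w.im := by
      have : w.im = z.re * z.im + z.im * z.re := by simp [hw, sq, Complex.mul_im]
      rw [this]; nlinarith [mul_pos hx hy']
    have hwD : w ∈ D := by
      rw [hD]
      rintro ⟨h1, _⟩
      exact absurd h1 (ne_of_gt hwim)
    have hA0 : p w / q w ≠ 0 := div_ne_zero (hp w hwD) (hq w hwD)
    have h1 := hG w hwim
    have h2 := hF w hwim
    set A := p w / q w with hA
    have hqp : q w / p w = A⁻¹ := by rw [hA, inv_div]
    have hAim : A.im ≤ 0 := by
      rw [hqp, Complex.inv_im] at h2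
      have hns : 0 < Complex.normSq A := Complex.normSq_pos.mpr hA0
      have h3 := mul_nonneg h2 hns.le
      rw [div_mul_cancel₀ _ (ne_of_gt hns)] at h3
      linarith
    have hwre : w.re = z.re * z.re - z.im * z.im := by simp [hw, sq, Complex.mul_re]
    have hwim' : w.im = z.re * z.im + z.im * z.re := by simp [hw, sq, Complex.mul_im]
    rw [mul_div_assoc, ← hA, Complex.mul_im, hwre, hwim'] at h1
    rw [mul_div_assoc, ← hA, Complex.mul_re]
    nlinarith [mul_pos hx hy', mul_nonneg (mul_self_nonneg z.re) (neg_nonneg.mpr hAim),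
      mul_nonneg (mul_self_nonneg z.im) (neg_nonneg.mpr hAim), h1]

/-- Kreĭn–Kac adaptation: if F = q/p and G(z) = z p(z)/q(z) are
S-functions (map ℂ₊ into its closure, positive on (0,∞)), with p, q real and
nonvanishing off (−∞,0], then w(z) = z p(z²)/q(z²) maps the open right
half-plane into its closure. -/
theorem stmt_15 (p q : ℂ → ℂ) (D : Set ℂ)
    (hD : D = {z : ℂ | ¬ (z.im = 0 ∧ z.re ≤ 0)})
    (hp : ∀ z ∈ D, p z ≠ 0) (hq : ∀ z ∈ D, q z ≠ 0)
    (hpreal : ∀ z ∈ D, p ((starRingEnd ℂ) z) = (starRingEnd ℂ) (p z))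
    (hqreal : ∀ z ∈ D, q ((starRingEnd ℂ) z) = (starRingEnd ℂ) (q z))
    (hF : ∀ z : ℂ, 0 < z.im → 0 ≤ (q z / p z).im)
    (hG : ∀ z : ℂ, 0 < z.im → 0 ≤ (z * p z / q z).im)
    (hFpos : ∀ x : ℝ, 0 < x → (q (x : ℂ) / p (x : ℂ)).im = 0 ∧
      0 < (q (x : ℂ) / p (x : ℂ)).re)
    (hGpos : ∀ x : ℝ, 0 < x → ((x : ℂ) * p (x : ℂ) / q (x : ℂ)).im = 0 ∧
      0 < ((x : ℂ) * p (x : ℂ) / q (x : ℂ)).re) :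
    ∀ z : ℂ, 0 < z.re → 0 ≤ (z * p (z ^ 2) / q (z ^ 2)).re := by
  intro z hz
  rcases le_or_gt 0 z.im with h | h
  · exact krein_kac_key p q D hD hp hq hF hG hGpos z hz h
  · -- use conjugation symmetry
    set z' := (starRingEnd ℂ) z with hz'
    have hz're : 0 < z'.re := by simpa [hz'] using hz
    have hz'im : 0 ≤ z'.im := by simp [hz']; linarith
    have hkey := krein_kac_key p q D hD hp hq hF hG hGpos z' hz're hz'im
    have hz2D : z ^ 2 ∈ D := by
      rw [hD]
      rintro ⟨h1, _⟩
      have : (z ^ 2).im = z.re * z.im + z.im * z.re := by simp [sq, Complex.mul_im]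
      rw [this] at h1
      nlinarith [mul_neg_of_pos_of_neg hz h]
    have hz'2 : z' ^ 2 = (starRingEnd ℂ) (z ^ 2) := by rw [hz', ← map_pow]
    have heq : z' * p (z' ^ 2) / q (z' ^ 2) = (starRingEnd ℂ) (z * p (z ^ 2) / q (z ^ 2)) := by
      rw [hz'2, hpreal _ hz2D, hqreal _ hz2D, map_div₀, map_mul]
    rw [heq] at hkey
    rwa [Complex.conj_re] at hkey
end

section
/- Let F be a real holomorphic function on a neighborhood of a real point x such that F(z) ≤ 0 (i.e., F(z) real and nonpositive) implies z ≤ 0 (z real nonpositive), for all z in the neighborhood. If x > 0, then F(x) > 0; if F(x) = 0, then the zero of F at x has multiplicity at most 2; and if F(x) < 0 (forcing x ≤ 0), then x is a point where F − F(x) has a simple zero, i.e. F′(x) ≠ 0. -/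
open Complex Filter Set Metric
open scoped Topology Real

private lemma analyticAt_deriv' {f : ℂ → ℂ} {x : ℂ} (h : AnalyticAt ℂ f x) :
    AnalyticAt ℂ (deriv f) x := by
  obtain ⟨s, hs, h2⟩ := h.eventually_analyticAt.exists_mem
  have : AnalyticOnNhd ℂ f s := fun y hy => h2 y hy
  exact this.deriv x (mem_of_mem_nhds hs)

private lemma exists_nth_root {g : ℂ → ℂ} {x : ℂ} (hg : AnalyticAt ℂ g x) (h0 : g x ≠ 0)
    (n : ℕ) (hn : n ≠ 0) :
    ∃ ψ : ℂ → ℂ, AnalyticAt ℂ ψ x ∧ ψ x ≠ 0 ∧ ∀ᶠ z in 𝓝 x, (ψ z) ^ n = g z := by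
  have hna : (n : ℂ) ≠ 0 := Nat.cast_ne_zero.mpr hn
  refine ⟨fun z => Complex.exp (Complex.log (g x) / n) *
      Complex.exp (Complex.log (g z / g x) / n), ?_, ?_, ?_⟩
  · apply analyticAt_const.mul
    apply AnalyticAt.cexp
    apply AnalyticAt.div _ analyticAt_const hna
    apply AnalyticAt.clog (hg.div analyticAt_const h0)
    simp [div_self h0, Complex.one_mem_slitPlane]
  · simp [div_self h0, Complex.exp_ne_zero]
  · filter_upwards [hg.continuousAt.eventually_ne h0] with z hz
    have e1 : (n : ℂ) * (Complex.log (g x) / n) = Complex.log (g x) := by field_simp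
    have e2 : (n : ℂ) * (Complex.log (g z / g x) / n) = Complex.log (g z / g x) := by field_simp
    rw [mul_pow, ← Complex.exp_nat_mul, ← Complex.exp_nat_mul, e1, e2,
      Complex.exp_log h0, Complex.exp_log (div_ne_zero hz h0)]
    field_simp

private lemma key (F : ℂ → ℂ) (x : ℝ) (U : Set ℂ) (hU : IsOpen U) (hxU : (x : ℂ) ∈ U)
    (hreal : ∀ y : ℝ, (y : ℂ) ∈ U → (F (y : ℂ)).im = 0)
    (hneg : ∀ z ∈ U, (F z).im = 0 → (F z).re ≤ 0 → z.im = 0 ∧ z.re ≤ 0)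
    (n : ℕ) (g : ℂ → ℂ) (hg : AnalyticAt ℂ g (x : ℂ)) (hgx : g (x : ℂ) ≠ 0)
    (heq : ∀ᶠ z in 𝓝 (x : ℂ), F z = F (x : ℂ) + (z - (x : ℂ)) ^ n * g z)
    (hcase : 3 ≤ n ∨ (2 ≤ n ∧ (F (x : ℂ)).re < 0))
    (hcre : (F (x : ℂ)).re ≤ 0) : False := by
  set c := F (x : ℂ) with hc
  have hcim : c.im = 0 := hreal x hxU
  have hn2 : 2 ≤ n := by
    rcases hcase with h | h
    · omega
    · exact h.1
  have hn0 : n ≠ 0 := by omega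
  have hna : (n : ℂ) ≠ 0 := Nat.cast_ne_zero.mpr hn0
  obtain ⟨ψ, hψa, hψx, hψn⟩ := exists_nth_root hg hgx n hn0
  set h : ℂ → ℂ := fun z => (z - (x : ℂ)) * ψ z with hh
  have hha : AnalyticAt ℂ h (x : ℂ) := by
    apply AnalyticAt.mul _ hψa
    exact (analyticAt_id).sub analyticAt_const
  have hh0 : h (x : ℂ) = 0 := by simp [hh]
  have hdh : HasDerivAt h (ψ (x : ℂ)) (x : ℂ) := by
    have h1 : HasDerivAt (fun z : ℂ => z - (x : ℂ)) 1 (x : ℂ) := (hasDerivAt_id _).sub_const _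
    have h2 : HasDerivAt ψ (deriv ψ (x : ℂ)) (x : ℂ) := hψa.differentiableAt.hasDerivAt
    have := h1.mul h2
    simpa [Pi.mul_def] using this
  have hdhx : deriv h (x : ℂ) = ψ (x : ℂ) := hdh.deriv
  have ev1 : ∀ᶠ z in 𝓝 (x : ℂ), deriv h z ≠ 0 := by
    apply ContinuousAt.eventually_ne ((analyticAt_deriv' hha).continuousAt)
    rw [hdhx]; exact hψx
  have ev2 : ∀ᶠ z in 𝓝 (x : ℂ), ψ z ≠ 0 := hψa.continuousAt.eventually_ne hψx
  have ev3 : ∀ᶠ z in 𝓝 (x : ℂ), F z = c + h z ^ n := by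
    filter_upwards [heq, hψn] with z h1 h2
    rw [h1, hh]; simp only [mul_pow, h2]
  have ev4 : ∀ᶠ z in 𝓝 (x : ℂ), AnalyticAt ℂ h z := hha.eventually_analyticAt
  have evU : ∀ᶠ z in 𝓝 (x : ℂ), z ∈ U := hU.eventually_mem hxU
  obtain ⟨δ, hδ, hB⟩ := Metric.eventually_nhds_iff_ball.mp (((ev1.and ev2).and (ev3.and ev4)).and evU)
  have hdhne : ∀ z ∈ ball (x : ℂ) δ, deriv h z ≠ 0 := fun z hz => (hB z hz).1.1.1
  have hψne : ∀ z ∈ ball (x : ℂ) δ, ψ z ≠ 0 := fun z hz => (hB z hz).1.1.2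
  have hFz : ∀ z ∈ ball (x : ℂ) δ, F z = c + h z ^ n := fun z hz => (hB z hz).1.2.1
  have hhan : ∀ z ∈ ball (x : ℂ) δ, AnalyticAt ℂ h z := fun z hz => (hB z hz).1.2.2
  have hUB : ∀ z ∈ ball (x : ℂ) δ, z ∈ U := fun z hz => (hB z hz).2
  have hhne : ∀ z ∈ ball (x : ℂ) δ, z ≠ (x : ℂ) → h z ≠ 0 := fun z hz hzx =>
    mul_ne_zero (sub_ne_zero.mpr hzx) (hψne z hz)
  have hmem : ∀ y : ℝ, y ∈ Ioo (x - δ) (x + δ) ↔ (y : ℂ) ∈ ball (x : ℂ) δ := by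
    intro y
    rw [mem_ball, Complex.dist_eq, ← Complex.ofReal_sub, Complex.norm_real, Real.norm_eq_abs, abs_sub_lt_iff,
      mem_Ioo]
    constructor <;> intro hy <;> constructor <;> linarith [hy.1, hy.2]
  have hFder : ∀ z ∈ ball (x : ℂ) δ, HasDerivAt F ((n : ℂ) * h z ^ (n - 1) * deriv h z) z := by
    intro z hz
    have hev : (fun w => c + h w ^ n) =ᶠ[𝓝 z] F := by
      filter_upwards [Metric.isOpen_ball.eventually_mem hz] with w hw using (hFz w hw).symm
    have h1 : HasDerivAt (fun w => c + h w ^ n) ((n : ℂ) * h z ^ (n - 1) * deriv h z) z :=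
      (((hhan z hz).differentiableAt.hasDerivAt).pow n).const_add c
    exact h1.congr_of_eventuallyEq hev.symm
  have hDim : ∀ y : ℝ, (y : ℂ) ∈ ball (x : ℂ) δ → (deriv F (y : ℂ)).im = 0 := by
    intro y hy
    have hD : HasDerivAt F (deriv F (y : ℂ)) (y : ℂ) := (hFder _ hy).differentiableAt.hasDerivAt
    have h1 : HasDerivAt (fun z => -I * F z) (-I * deriv F (y : ℂ)) (y : ℂ) := hD.const_mul _
    have h2 := h1.real_of_complex
    have h3 : (fun t : ℝ => ((-I) * F (t : ℂ)).re) =ᶠ[𝓝 y] fun _ => (0 : ℝ) := by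
      have hc : ContinuousAt (fun t : ℝ => (t : ℂ)) y := Complex.continuous_ofReal.continuousAt
      filter_upwards [hc.eventually_mem (Metric.isOpen_ball.mem_nhds hy)] with t ht
      have him : (F (t : ℂ)).im = 0 := hreal t (hUB _ ht)
      simp [Complex.mul_re, him]
    have h4 : HasDerivAt (fun _ : ℝ => (0 : ℝ)) ((-I * deriv F (y : ℂ)).re) y :=
      h2.congr_of_eventuallyEq h3.symm
    have h5 : (-I * deriv F (y : ℂ)).re = 0 := h4.unique (hasDerivAt_const y 0)
    simpa [Complex.mul_re] using h5
  have rolle : ∀ a b : ℝ, a < b → (∀ t ∈ Icc a b, (t : ℂ) ∈ ball (x : ℂ) δ ∧ t ≠ x) →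
      (F (a : ℂ)).re = (F (b : ℂ)).re → False := by
    intro a b hab hsub hfab
    obtain ⟨ξ, hξ, hξ0⟩ := exists_deriv_eq_zero hab (fun t ht =>
      ((hFder _ (hsub t ht).1).differentiableAt.hasDerivAt.real_of_complex).continuousAt.continuousWithinAt) hfab
    have hξI : ξ ∈ Icc a b := Ioo_subset_Icc_self hξ
    obtain ⟨hξb, hξx⟩ := hsub ξ hξI
    have hD : HasDerivAt (fun t : ℝ => (F (t : ℂ)).re) ((deriv F (ξ : ℂ)).re) ξ :=
      ((hFder _ hξb).differentiableAt.hasDerivAt).real_of_complex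
    have hre0 : (deriv F (ξ : ℂ)).re = 0 := by rw [← hD.deriv]; exact hξ0
    have hne : deriv F (ξ : ℂ) ≠ 0 := by
      rw [(hFder _ hξb).deriv]
      have hξx' : (ξ : ℂ) ≠ (x : ℂ) := by exact_mod_cast hξx
      exact mul_ne_zero (mul_ne_zero hna (pow_ne_zero _ (hhne _ hξb hξx'))) (hdhne _ hξb)
    exact hne (Complex.ext hre0 (hDim ξ hξb))
  have pair : ∀ a b : ℝ, a ≠ b → (a : ℂ) ∈ ball (x : ℂ) δ → (b : ℂ) ∈ ball (x : ℂ) δ →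
      ((a < x ∧ b < x) ∨ (x < a ∧ x < b)) → (F (a : ℂ)).re = (F (b : ℂ)).re → False := by
    intro a b hab ha hb hside hf
    have ha' := (hmem a).mpr ha
    have hb' := (hmem b).mpr hb
    have key : ∀ u v : ℝ, u < v → u ∈ Ioo (x - δ) (x + δ) → v ∈ Ioo (x - δ) (x + δ) →
        ((u < x ∧ v < x) ∨ (x < u ∧ x < v)) → (F (u : ℂ)).re = (F (v : ℂ)).re → False := by
      intro u v huv hu hv hs hfuv
      apply rolle u v huv _ hfuv
      intro t ht
      constructor
      · rw [← hmem]; exact ⟨by linarith [hu.1, ht.1], by linarith [hv.2, ht.2]⟩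
      · rcases hs with ⟨h1, h2⟩ | ⟨h1, h2⟩
        · exact ne_of_lt (by linarith [ht.2])
        · exact ne_of_gt (by linarith [ht.1])
    rcases hab.lt_or_gt with hlt | hlt
    · exact key a b hlt ha' hb' hside hf
    · exact key b a hlt hb' ha' (by tauto) hf.symm
  -- open mapping
  have hmap : 𝓝 (0 : ℂ) ≤ map h (𝓝 (x : ℂ)) := by
    rcases hha.eventually_constant_or_nhds_le_map_nhds with hconst | hm
    · exfalso
      have hch : h =ᶠ[𝓝 (x : ℂ)] fun _ => h (x : ℂ) := hconst
      have : deriv h (x : ℂ) = 0 := by rw [hch.deriv_eq, deriv_const]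
      rw [hdhx] at this; exact hψx this
    · rwa [hh0] at hm
  have himg : h '' ball (x : ℂ) δ ∈ 𝓝 (0 : ℂ) := hmap (image_mem_map (ball_mem_nhds _ hδ))
  obtain ⟨ρ, hρ, hρsub⟩ := Metric.mem_nhds_iff.mp himg
  have getpt : ∀ w : ℂ, ‖w‖ < ρ → ∃ z ∈ ball (x : ℂ) δ, h z = w := by
    intro w hw
    have : w ∈ ball (0 : ℂ) ρ := by simpa [mem_ball, Complex.dist_eq] using hw
    obtain ⟨z, hz, hzw⟩ := hρsub this
    exact ⟨z, hz, hzw⟩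
  have gety : ∀ w : ℂ, ‖w‖ < ρ → w ≠ 0 → (c + w ^ n).im = 0 → (c + w ^ n).re ≤ 0 →
      ∃ y : ℝ, (y : ℂ) ∈ ball (x : ℂ) δ ∧ h (y : ℂ) = w ∧ y ≠ x := by
    intro w hwρ hw0 him hre
    obtain ⟨z, hz, hzw⟩ := getpt w hwρ
    have hFzv : F z = c + w ^ n := by rw [hFz z hz, hzw]
    have hz0 := hneg z (hUB z hz) (by rw [hFzv]; exact him) (by rw [hFzv]; exact hre)
    have zr : ((z.re : ℝ) : ℂ) = z := Complex.ext rfl (by simp [hz0.1])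
    refine ⟨z.re, by rwa [zr], by rwa [zr], fun hyx => ?_⟩
    rw [hyx] at zr
    rw [← zr] at hzw
    rw [hh0] at hzw
    exact hw0 hzw.symm
  -- roots of unity
  set ζ : ℂ := Complex.exp (2 * (π : ℂ) * I / n) with hζdef
  have hprim : IsPrimitiveRoot ζ n := Complex.isPrimitiveRoot_exp n hn0
  have hζn : ζ ^ n = 1 := hprim.pow_eq_one
  have hζ1 : ζ ≠ 1 := hprim.ne_one hn2
  have habsζ : ‖ζ‖ = 1 := by
    have e : 2 * (π : ℂ) * I / n = ((2 * π / n : ℝ) : ℂ) * I := by push_cast; ring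
    rw [hζdef, e, Complex.norm_exp]
    simp
  have habse : ‖Complex.exp ((π : ℂ) * I / n)‖ = 1 := by
    have e : (π : ℂ) * I / n = ((π / n : ℝ) : ℂ) * I := by push_cast; ring
    rw [e, Complex.norm_exp]
    simp
  have hexpn : Complex.exp ((π : ℂ) * I / n) ^ n = -1 := by
    rw [← Complex.exp_nat_mul]
    have e : (n : ℂ) * ((π : ℂ) * I / n) = (π : ℂ) * I := by field_simp
    rw [e, Complex.exp_pi_mul_I]
  by_cases hn3 : 3 ≤ n
  · -- at least 3 roots of c - r^n, all real: contradiction by Rolle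
    set r : ℝ := ρ / 2 with hrdef
    have hr0 : 0 < r := by positivity
    have hrρ : r < ρ := by rw [hrdef]; linarith
    set w₀ : ℂ := (r : ℂ) * Complex.exp ((π : ℂ) * I / n) with hw₀
    have habsw₀ : ‖w₀‖ = r := by
      rw [hw₀, norm_mul, Complex.norm_real, Real.norm_eq_abs, habse, mul_one, abs_of_pos hr0]
    have hw₀n : w₀ ^ n = -((r : ℂ) ^ n) := by rw [hw₀, mul_pow, hexpn]; ring
    have hw₀0 : w₀ ≠ 0 :=
      mul_ne_zero (Complex.ofReal_ne_zero.mpr hr0.ne') (Complex.exp_ne_zero _)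
    have hwk : ∀ k : ℕ, (w₀ * ζ ^ k) ^ n = -((r : ℂ) ^ n) := by
      intro k
      rw [mul_pow, ← pow_mul, mul_comm k n, pow_mul, hζn, one_pow, mul_one, hw₀n]
    have habswk : ∀ k : ℕ, ‖w₀ * ζ ^ k‖ = r := by
      intro k
      rw [norm_mul, norm_pow, habsζ, one_pow, mul_one, habsw₀]
    have hcast : ((r : ℂ)) ^ n = ((r ^ n : ℝ) : ℂ) := by push_cast; ring
    have hvim : (c + -((r : ℂ) ^ n)).im = 0 := by
      rw [Complex.add_im, Complex.neg_im, hcast, Complex.ofReal_im, hcim]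
      ring
    have hvre : (c + -((r : ℂ) ^ n)).re ≤ 0 := by
      rw [hcast]
      simp only [Complex.add_re, Complex.neg_re, Complex.ofReal_re]
      nlinarith [pow_pos hr0 n]
    have gk : ∀ k : ℕ, ∃ y : ℝ, (y : ℂ) ∈ ball (x : ℂ) δ ∧ h (y : ℂ) = w₀ * ζ ^ k ∧ y ≠ x := by
      intro k
      exact gety _ (by rw [habswk]; exact hrρ)
        (mul_ne_zero hw₀0 (pow_ne_zero _ (Complex.exp_ne_zero _)))
        (by rw [hwk]; exact hvim) (by rw [hwk]; exact hvre)
    obtain ⟨y0, hb0, hv0, hx0⟩ := gk 0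
    obtain ⟨y1, hb1, hv1, hx1⟩ := gk 1
    obtain ⟨y2, hb2, hv2, hx2⟩ := gk 2
    have hdis : ∀ i j : ℕ, i < n → j < n → i ≠ j → w₀ * ζ ^ i ≠ w₀ * ζ ^ j := by
      intro i j hi hj hij heq'
      exact hij (hprim.pow_inj hi hj (mul_left_cancel₀ hw₀0 heq'))
    have hne01 : y0 ≠ y1 := fun e =>
      hdis 0 1 (by omega) (by omega) (by omega) (by rw [← hv0, ← hv1, e])
    have hne02 : y0 ≠ y2 := fun e =>
      hdis 0 2 (by omega) (by omega) (by omega) (by rw [← hv0, ← hv2, e])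
    have hne12 : y1 ≠ y2 := fun e =>
      hdis 1 2 (by omega) (by omega) (by omega) (by rw [← hv1, ← hv2, e])
    have hfval : ∀ (y : ℝ) (k : ℕ), (y : ℂ) ∈ ball (x : ℂ) δ → h (y : ℂ) = w₀ * ζ ^ k →
        (F (y : ℂ)).re = (c + -((r : ℂ) ^ n)).re := by
      intro y k hy hv
      rw [hFz _ hy, hv, hwk]
    have f0 := hfval y0 0 hb0 hv0
    have f1 := hfval y1 1 hb1 hv1
    have f2 := hfval y2 2 hb2 hv2
    rcases hx0.lt_or_gt with h0 | h0 <;> rcases hx1.lt_or_gt with h1 | h1 <;>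
        rcases hx2.lt_or_gt with h2 | h2 <;>
      first
      | exact pair y0 y1 hne01 hb0 hb1 (Or.inl ⟨h0, h1⟩) (f0.trans f1.symm)
      | exact pair y0 y1 hne01 hb0 hb1 (Or.inr ⟨h0, h1⟩) (f0.trans f1.symm)
      | exact pair y0 y2 hne02 hb0 hb2 (Or.inl ⟨h0, h2⟩) (f0.trans f2.symm)
      | exact pair y0 y2 hne02 hb0 hb2 (Or.inr ⟨h0, h2⟩) (f0.trans f2.symm)
      | exact pair y1 y2 hne12 hb1 hb2 (Or.inl ⟨h1, h2⟩) (f1.trans f2.symm)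
      | exact pair y1 y2 hne12 hb1 hb2 (Or.inr ⟨h1, h2⟩) (f1.trans f2.symm)
  · -- n = 2 case essentially: c.re < 0, use values c ± r^n
    have hcneg : c.re < 0 := by
      rcases hcase with h3 | h'
      · exact absurd h3 hn3
      · exact h'.2
    set r : ℝ := min (ρ / 2) (min 1 (-c.re / 2)) with hrdef
    have hr0 : 0 < r := lt_min (by positivity) (lt_min one_pos (by linarith))
    have hrρ : r < ρ := lt_of_le_of_lt (min_le_left _ _) (by linarith)
    have hr1 : r ≤ 1 := le_trans (min_le_right _ _) (min_le_left _ _)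
    have hrc : r ≤ -c.re / 2 := le_trans (min_le_right _ _) (min_le_right _ _)
    have hrn : r ^ n ≤ r := pow_le_of_le_one hr0.le hr1 hn0
    have hrnpos : 0 < r ^ n := pow_pos hr0 n
    set w₀ : ℂ := (r : ℂ) * Complex.exp ((π : ℂ) * I / n) with hw₀
    have habsw₀ : ‖w₀‖ = r := by
      rw [hw₀, norm_mul, Complex.norm_real, Real.norm_eq_abs, habse, mul_one, abs_of_pos hr0]
    have hw₀n : w₀ ^ n = -((r : ℂ) ^ n) := by rw [hw₀, mul_pow, hexpn]; ring
    have hw₀0 : w₀ ≠ 0 :=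
      mul_ne_zero (Complex.ofReal_ne_zero.mpr hr0.ne') (Complex.exp_ne_zero _)
    have hζ0 : ζ ≠ 0 := Complex.exp_ne_zero _
    have hr0' : ((r : ℝ) : ℂ) ≠ 0 := Complex.ofReal_ne_zero.mpr hr0.ne'
    have hcast : ((r : ℂ)) ^ n = ((r ^ n : ℝ) : ℂ) := by push_cast; ring
    have hvm : (c + -((r : ℂ) ^ n)).re = c.re - r ^ n := by
      rw [Complex.add_re, Complex.neg_re, hcast, Complex.ofReal_re]; ring
    have hvp : (c + ((r : ℂ) ^ n)).re = c.re + r ^ n := by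
      rw [Complex.add_re, hcast, Complex.ofReal_re]
    have hvim : (c + -((r : ℂ) ^ n)).im = 0 := by
      rw [Complex.add_im, Complex.neg_im, hcast, Complex.ofReal_im, hcim]; ring
    have hvre : (c + -((r : ℂ) ^ n)).re ≤ 0 := by rw [hvm]; nlinarith
    have hvim' : (c + ((r : ℂ) ^ n)).im = 0 := by
      rw [Complex.add_im, hcast, Complex.ofReal_im, hcim]; ring
    have hvre' : (c + ((r : ℂ) ^ n)).re ≤ 0 := by rw [hvp]; nlinarith
    have hwm2 : (w₀ * ζ) ^ n = -((r : ℂ) ^ n) := by rw [mul_pow, hζn, mul_one, hw₀n]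
    have hwp2 : ((r : ℂ) * ζ) ^ n = (r : ℂ) ^ n := by rw [mul_pow, hζn, mul_one]
    obtain ⟨a1, hba1, hva1, hxa1⟩ := gety w₀ (by rw [habsw₀]; exact hrρ) hw₀0
      (by rw [hw₀n]; exact hvim) (by rw [hw₀n]; exact hvre)
    obtain ⟨a2, hba2, hva2, hxa2⟩ := gety (w₀ * ζ)
      (by rw [norm_mul, habsζ, mul_one, habsw₀]; exact hrρ)
      (mul_ne_zero hw₀0 hζ0) (by rw [hwm2]; exact hvim) (by rw [hwm2]; exact hvre)
    obtain ⟨b1, hbb1, hvb1, hxb1⟩ := gety ((r : ℂ))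
      (by rw [Complex.norm_real, Real.norm_eq_abs, abs_of_pos hr0]; exact hrρ)
      hr0' hvim' hvre'
    obtain ⟨b2, hbb2, hvb2, hxb2⟩ := gety ((r : ℂ) * ζ)
      (by rw [norm_mul, Complex.norm_real, Real.norm_eq_abs, habsζ, mul_one, abs_of_pos hr0]; exact hrρ)
      (mul_ne_zero hr0' hζ0) (by rw [hwp2]; exact hvim') (by rw [hwp2]; exact hvre')
    have ha12 : a1 ≠ a2 := by
      intro e
      have h1 : w₀ * 1 = w₀ * ζ := by rw [mul_one, ← hva2, ← e, hva1]
      exact hζ1 (mul_left_cancel₀ hw₀0 h1).symm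
    have hb12 : b1 ≠ b2 := by
      intro e
      have h1 : (r : ℂ) * 1 = (r : ℂ) * ζ := by rw [mul_one, ← hvb2, ← e, hvb1]
      exact hζ1 (mul_left_cancel₀ hr0' h1).symm
    have fa1 : (F (a1 : ℂ)).re = (c + -((r : ℂ) ^ n)).re := by rw [hFz _ hba1, hva1, hw₀n]
    have fa2 : (F (a2 : ℂ)).re = (c + -((r : ℂ) ^ n)).re := by rw [hFz _ hba2, hva2, hwm2]
    have fb1 : (F (b1 : ℂ)).re = (c + ((r : ℂ) ^ n)).re := by rw [hFz _ hbb1, hvb1]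
    have fb2 : (F (b2 : ℂ)).re = (c + ((r : ℂ) ^ n)).re := by rw [hFz _ hbb2, hvb2, hwp2]
    obtain ⟨p, hpx, hpb, hpf⟩ : ∃ p : ℝ, x < p ∧ (p : ℂ) ∈ ball (x : ℂ) δ ∧
        (F (p : ℂ)).re = (c + -((r : ℂ) ^ n)).re := by
      rcases hxa1.lt_or_gt with h1 | h1
      · rcases hxa2.lt_or_gt with h2 | h2
        · exact (pair a1 a2 ha12 hba1 hba2 (Or.inl ⟨h1, h2⟩) (fa1.trans fa2.symm)).elim
        · exact ⟨a2, h2, hba2, fa2⟩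
      · exact ⟨a1, h1, hba1, fa1⟩
    obtain ⟨q, hqx, hqb, hqf⟩ : ∃ q : ℝ, x < q ∧ (q : ℂ) ∈ ball (x : ℂ) δ ∧
        (F (q : ℂ)).re = (c + ((r : ℂ) ^ n)).re := by
      rcases hxb1.lt_or_gt with h1 | h1
      · rcases hxb2.lt_or_gt with h2 | h2
        · exact (pair b1 b2 hb12 hbb1 hbb2 (Or.inl ⟨h1, h2⟩) (fb1.trans fb2.symm)).elim
        · exact ⟨b2, h2, hbb2, fb2⟩
      · exact ⟨b1, h1, hbb1, fb1⟩
    have noroot : ∀ ξ : ℝ, (ξ : ℂ) ∈ ball (x : ℂ) δ → ξ ≠ x → (F (ξ : ℂ)).re = c.re → False := by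
      intro ξ hξb hξx hξv
      have hFξ : F (ξ : ℂ) = c := Complex.ext hξv (by rw [hreal ξ (hUB _ hξb), hcim])
      have h2 := hFz _ hξb
      rw [hFξ] at h2
      have h0 : h (ξ : ℂ) ^ n = 0 := by linear_combination h2.symm
      exact (pow_ne_zero n (hhne _ hξb (by exact_mod_cast hξx))) h0
    have hcont : ∀ u v : ℝ, x < u → (u : ℂ) ∈ ball (x : ℂ) δ → (v : ℂ) ∈ ball (x : ℂ) δ →
        u ≤ v → ∀ t ∈ Icc u v, (t : ℂ) ∈ ball (x : ℂ) δ ∧ x < t := by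
      intro u v hu hub hvb huv t ht
      have hu' := (hmem u).mpr hub
      have hv' := (hmem v).mpr hvb
      exact ⟨(hmem t).mp ⟨by linarith [hu'.1, ht.1], by linarith [hv'.2, ht.2]⟩,
        by linarith [ht.1]⟩
    rcases lt_trichotomy p q with hlt | heq' | hlt
    · have hsub := hcont p q hpx hpb hqb hlt.le
      have hfc : ContinuousOn (fun t : ℝ => (F (t : ℂ)).re) (Icc p q) := fun t ht =>
        ((hFder _ (hsub t ht).1).differentiableAt.hasDerivAt.real_of_complex).continuousAt.continuousWithinAt
      have hmemv : c.re ∈ Icc ((F (p : ℂ)).re) ((F (q : ℂ)).re) := by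
        rw [Set.mem_Icc, hpf, hqf, hvm, hvp]
        constructor <;> linarith
      obtain ⟨ξ, hξI, hξv⟩ := intermediate_value_Icc hlt.le hfc hmemv
      exact noroot ξ (hsub ξ hξI).1 (ne_of_gt (hsub ξ hξI).2) hξv
    · rw [heq', hqf, hvp] at hpf
      rw [hvm] at hpf
      linarith
    · have hsub := hcont q p hqx hqb hpb hlt.le
      have hfc : ContinuousOn (fun t : ℝ => (F (t : ℂ)).re) (Icc q p) := fun t ht =>
        ((hFder _ (hsub t ht).1).differentiableAt.hasDerivAt.real_of_complex).continuousAt.continuousWithinAt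
      have hmemv : c.re ∈ Icc ((F (p : ℂ)).re) ((F (q : ℂ)).re) := by
        rw [Set.mem_Icc, hpf, hqf, hvm, hvp]
        constructor <;> linarith
      obtain ⟨ξ, hξI, hξv⟩ := intermediate_value_Icc' hlt.le hfc hmemv
      exact noroot ξ (hsub ξ hξI).1 (ne_of_gt (hsub ξ hξI).2) hξv

private lemma two_le_order {F g : ℂ → ℂ} {x : ℂ} {m : ℕ}
    (hg : AnalyticAt ℂ g x) (hgx : g x ≠ 0)
    (heq : ∀ᶠ z in 𝓝 x, F z - F x = (z - x) ^ m • g z)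
    (hd1 : deriv F x = 0) : 2 ≤ m := by
  by_contra hcon
  push_neg at hcon
  interval_cases m
  · have h0 := heq.self_of_nhds
    simp at h0
    exact hgx h0.symm
  · have hde : deriv (fun z => F z - F x) x = deriv (fun z => (z - x) ^ 1 • g z) x :=
      Filter.EventuallyEq.deriv_eq heq
    have hL : deriv (fun z => F z - F x) x = 0 := by rw [deriv_sub_const, hd1]
    have hR : HasDerivAt (fun z => (z - x) ^ 1 • g z) (g x) x := by
      have q1 : HasDerivAt (fun z : ℂ => z - x) 1 x := (hasDerivAt_id _).sub_const _
      have := q1.mul hg.differentiableAt.hasDerivAt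
      simpa [Pi.mul_def] using this
    rw [hL, hR.deriv] at hde
    exact hgx hde.symm

private lemma ne_two_order {F g : ℂ → ℂ} {x : ℂ}
    (hg : AnalyticAt ℂ g x) (hgx : g x ≠ 0)
    (heq : ∀ᶠ z in 𝓝 x, F z - F x = (z - x) ^ 2 • g z)
    (hd2 : iteratedDeriv 2 F x = 0) : False := by
  have hder1 : (deriv fun z => F z - F x) =ᶠ[𝓝 x] deriv (fun z => (z - x) ^ 2 • g z) :=
    Filter.EventuallyEq.deriv heq
  have hder2 : deriv (fun z => (z - x) ^ 2 • g z) =ᶠ[𝓝 x]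
      fun z => 2 * (z - x) * g z + (z - x) ^ 2 * deriv g z := by
    filter_upwards [hg.eventually_analyticAt] with z hz
    have q1 : HasDerivAt (fun w : ℂ => (w - x) ^ 2) (2 * (z - x) ^ 1 * 1) z :=
      ((hasDerivAt_id _).sub_const _).pow 2
    have q2 := q1.mul hz.differentiableAt.hasDerivAt
    have q3 : HasDerivAt (fun w => (w - x) ^ 2 • g w)
        (2 * (z - x) * g z + (z - x) ^ 2 * deriv g z) z := by
      simp only [smul_eq_mul]
      simp only [Pi.mul_def] at q2
      exact q2.congr_deriv (by ring)
    exact q3.deriv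
  have hkey : deriv (deriv fun z => F z - F x) x =
      deriv (fun z => 2 * (z - x) * g z + (z - x) ^ 2 * deriv g z) x :=
    Filter.EventuallyEq.deriv_eq (hder1.trans hder2)
  have hL : deriv (deriv fun z => F z - F x) x = 0 := by
    have e1 : (deriv fun z => F z - F x) = deriv F := funext fun z => deriv_sub_const _
    have e2 : iteratedDeriv 2 F = deriv (deriv F) := by rw [iteratedDeriv_succ, iteratedDeriv_one]
    rw [e1, ← e2, hd2]
  have hR : HasDerivAt (fun z => 2 * (z - x) * g z + (z - x) ^ 2 * deriv g z) (2 * g x) x := by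
    have q1 : HasDerivAt (fun z : ℂ => 2 * (z - x)) 2 x := by
      simpa using ((hasDerivAt_id x).sub_const x).const_mul (2 : ℂ)
    have t1 : HasDerivAt (fun z => 2 * (z - x) * g z) (2 * g x) x := by
      have := q1.mul hg.differentiableAt.hasDerivAt
      simpa [Pi.mul_def] using this
    have q3 : HasDerivAt (fun z : ℂ => (z - x) ^ 2) 0 x := by
      simpa [Pi.pow_def] using ((hasDerivAt_id x).sub_const x).pow 2
    have t2 : HasDerivAt (fun z => (z - x) ^ 2 * deriv g z) 0 x := by
      have := q3.mul (analyticAt_deriv' hg).differentiableAt.hasDerivAt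
      simpa [Pi.mul_def] using this
    simpa [Pi.add_def] using t1.add t2
  rw [hL, hR.deriv] at hkey
  have : g x = 0 := by
    have h2 : (2 : ℂ) ≠ 0 := two_ne_zero
    field_simp at hkey
    simpa using hkey.symm
  exact hgx this

/-- Fact A: let F be a nonconstant real holomorphic function near
the real point x such that F(z) being a nonpositive real forces z to be a
nonpositive real. Then: x > 0 implies F(x) > 0; if F(x) = 0 the zero has
multiplicity at most 2; and if F(x) < 0 then x ≤ 0 and F′(x) ≠ 0. -/
theorem stmt_16 (F : ℂ → ℂ) (x : ℝ) (U : Set ℂ)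
    (hU : IsOpen U) (hxU : (x : ℂ) ∈ U)
    (hF : DifferentiableOn ℂ F U)
    (hreal : ∀ y : ℝ, (y : ℂ) ∈ U → (F (y : ℂ)).im = 0)
    (hneg : ∀ z ∈ U, (F z).im = 0 → (F z).re ≤ 0 → z.im = 0 ∧ z.re ≤ 0)
    (hnc : ∃ z ∈ U, F z ≠ F (x : ℂ)) :
    (0 < x → 0 < (F (x : ℂ)).re) ∧
    (F (x : ℂ) = 0 → deriv F (x : ℂ) ≠ 0 ∨ iteratedDeriv 2 F (x : ℂ) ≠ 0) ∧
    ((F (x : ℂ)).re < 0 → x ≤ 0 ∧ deriv F (x : ℂ) ≠ 0) := by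
  have hcim : (F (x : ℂ)).im = 0 := hreal x hxU
  have hFa : AnalyticAt ℂ F (x : ℂ) := hF.analyticAt (hU.mem_nhds hxU)
  have hGa : AnalyticAt ℂ (fun z => F z - F (x : ℂ)) (x : ℂ) := hFa.sub analyticAt_const
  have basic : (F (x : ℂ)).re ≤ 0 → x ≤ 0 := by
    intro hle
    have h1 := (hneg (x : ℂ) hxU hcim hle).2
    simpa using h1
  have constCase : (∀ᶠ z in 𝓝 (x : ℂ), F z = F (x : ℂ)) → (F (x : ℂ)).re ≤ 0 → False := by
    intro hev hle
    obtain ⟨ε, hε, hb⟩ := Metric.eventually_nhds_iff_ball.mp (hev.and (hU.eventually_mem hxU))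
    set z : ℂ := (x : ℂ) + ((ε / 2 : ℝ) : ℂ) * I with hz
    have hzb : z ∈ Metric.ball (x : ℂ) ε := by
      rw [Metric.mem_ball, Complex.dist_eq, hz]
      have : (x : ℂ) + ((ε / 2 : ℝ) : ℂ) * I - (x : ℂ) = ((ε / 2 : ℝ) : ℂ) * I := by ring
      rw [this, norm_mul, Complex.norm_real, Real.norm_eq_abs, Complex.norm_I, mul_one, abs_of_pos (by linarith)]
      linarith
    obtain ⟨h1, h2⟩ := hb z hzb
    have h3 := hneg z h2 (by rw [h1]; exact hcim) (by rw [h1]; exact hle)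
    have h4 : z.im = ε / 2 := by simp [hz]
    rw [h3.1] at h4
    linarith
  have getOrder : analyticOrderAt (fun z => F z - F (x : ℂ)) (x : ℂ) ≠ ⊤ → ∃ (m : ℕ) (g : ℂ → ℂ), AnalyticAt ℂ g (x : ℂ) ∧
      g (x : ℂ) ≠ 0 ∧ (∀ᶠ z in 𝓝 (x : ℂ), F z - F (x : ℂ) = (z - (x : ℂ)) ^ m • g z) ∧
      analyticOrderAt (fun z => F z - F (x : ℂ)) (x : ℂ) = m := by
    intro htop
    obtain ⟨m, hm⟩ := WithTop.ne_top_iff_exists.mp htop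
    obtain ⟨g, hg, hgx, heq⟩ := (hGa.analyticOrderAt_eq_natCast (n := m)).mp hm.symm
    exact ⟨m, g, hg, hgx, heq, hm.symm⟩
  have topCase : analyticOrderAt (fun z => F z - F (x : ℂ)) (x : ℂ) = ⊤ → (F (x : ℂ)).re ≤ 0 → False := by
    intro htop hle
    apply constCase _ hle
    filter_upwards [analyticOrderAt_eq_top.mp htop] with z hzz
    have : F z - F (x : ℂ) = 0 := hzz
    linear_combination this
  refine ⟨?_, ?_, ?_⟩
  · intro hx
    by_contra hcon
    push_neg at hcon
    linarith [basic hcon]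
  · intro hF0
    by_contra hcon
    push_neg at hcon
    obtain ⟨hd1, hd2⟩ := hcon
    have hle : (F (x : ℂ)).re ≤ 0 := by rw [hF0]; simp
    by_cases htop : analyticOrderAt (fun z => F z - F (x : ℂ)) (x : ℂ) = ⊤
    · exact topCase htop hle
    · obtain ⟨m, g, hg, hgx, heq, _⟩ := getOrder htop
      have hm2 : 2 ≤ m := two_le_order hg hgx heq hd1
      have hm3 : 3 ≤ m := by
        rcases Nat.lt_or_ge m 3 with hlt | hge
        · exfalso
          have : m = 2 := by omega
          subst this
          exact ne_two_order hg hgx heq hd2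
        · exact hge
      have heq' : ∀ᶠ z in 𝓝 (x : ℂ), F z = F (x : ℂ) + (z - (x : ℂ)) ^ m * g z := by
        filter_upwards [heq] with z hzz
        rw [smul_eq_mul] at hzz
        linear_combination hzz
      exact key F x U hU hxU hreal hneg m g hg hgx heq' (Or.inl hm3) hle
  · intro hFneg
    refine ⟨basic hFneg.le, ?_⟩
    intro hd1
    by_cases htop : analyticOrderAt (fun z => F z - F (x : ℂ)) (x : ℂ) = ⊤
    · exact topCase htop hFneg.le
    · obtain ⟨m, g, hg, hgx, heq, _⟩ := getOrder htop
      have hm2 : 2 ≤ m := two_le_order hg hgx heq hd1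
      have heq' : ∀ᶠ z in 𝓝 (x : ℂ), F z = F (x : ℂ) + (z - (x : ℂ)) ^ m * g z := by
        filter_upwards [heq] with z hzz
        rw [smul_eq_mul] at hzz
        linear_combination hzz
      exact key F x U hU hxU hreal hneg m g hg hgx heq' (Or.inr ⟨hm2, hFneg⟩) hFneg.le
end

section
/- Let F be a real meromorphic function on ℂ \ {0} such that F(z) ≤ 0 implies z ∈ (−∞,0] and (z/F(z)) ≤ 0 implies z ∈ (−∞,0]. Suppose x < 0 is a zero of F of multiplicity exactly 2 (F(x) = F′(x) = 0 ≠ F″(x)). Then a contradiction arises: the function z⁻¹F(z) also has a double zero at x but is positive on a punctured real neighborhood of x, violating the multiplicity-2 level-set structure. Hence all negative zeros of such F are simple. -/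
open Complex
open Filter Topology

lemma key_lemma (q g : ℂ → ℂ) (x : ℝ) (hx : x < 0)
    (hg : AnalyticAt ℂ g (x : ℂ)) (hgpos : 0 < (g (x : ℂ)).re)
    (heq : ∀ᶠ z in 𝓝 (x : ℂ), q z = (z - (x : ℂ)) ^ 2 * g z)
    (hneg : ∀ z : ℂ, z ≠ 0 → q z ≠ 0 → (q z).im = 0 → (q z).re ≤ 0 → z.im = 0) :
    False := by
  have hgx0 : g (x : ℂ) ≠ 0 := fun h => by simp [h] at hgpos
  have hslit : g (x : ℂ) ∈ slitPlane := Or.inl hgpos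
  set h : ℂ → ℂ := fun z => Complex.exp (Complex.log (g z) / 2) with hh_def
  have hh : AnalyticAt ℂ h (x : ℂ) := ((hg.clog hslit).div analyticAt_const (by norm_num)).cexp
  have hsq : ∀ᶠ z in 𝓝 (x : ℂ), h z ^ 2 = g z := by
    filter_upwards [hg.continuousAt.eventually_ne hgx0] with z hz
    rw [hh_def, sq, ← Complex.exp_add, add_halves, Complex.exp_log hz]
  set φ : ℂ → ℂ := fun z => (z - (x : ℂ)) * h z with hφ_def
  have hhx : h (x : ℂ) ≠ 0 := Complex.exp_ne_zero _
  have hhd : HasStrictDerivAt h (deriv h (x : ℂ)) (x : ℂ) :=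
    (hh.contDiffAt (n := 1)).hasStrictDerivAt one_ne_zero
  have hstrict : HasStrictDerivAt φ (h (x : ℂ)) (x : ℂ) := by
    have ha : HasStrictDerivAt (fun y : ℂ => y - (x : ℂ)) 1 (x : ℂ) :=
      by simpa [Pi.sub_def] using (hasStrictDerivAt_id (x : ℂ)).sub (hasStrictDerivAt_const (x : ℂ) (x : ℂ))
    have h' := HasStrictDerivAt.mul ha hhd
    simpa [Pi.mul_def] using h'
  have hmap : Filter.map φ (𝓝 (x : ℂ)) = 𝓝 0 := by
    have := hstrict.map_nhds_eq hhx
    simpa [hφ_def] using this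
  have hre : ∀ᶠ z in 𝓝 (x : ℂ), z.re < 0 := by
    have : ContinuousAt Complex.re (x : ℂ) := Complex.continuous_re.continuousAt
    have h0 : Complex.re (x : ℂ) < 0 := by simpa using hx
    exact this.eventually_lt continuousAt_const h0
  have hgre : ∀ᶠ z in 𝓝 (x : ℂ), 0 < (g z).re := by
    have : ContinuousAt (fun z => (g z).re) (x : ℂ) :=
      Complex.continuous_re.continuousAt.comp hg.continuousAt
    exact continuousAt_const.eventually_lt this hgpos
  have hU : {z : ℂ | q z = φ z ^ 2 ∧ z.re < 0 ∧ 0 < (g z).re ∧ q z = (z - (x : ℂ)) ^ 2 * g z} ∈ 𝓝 (x : ℂ) := by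
    filter_upwards [heq, hsq, hre, hgre] with z h1 h2 h3 h4
    refine ⟨?_, h3, h4, h1⟩
    rw [h1, hφ_def]
    simp only [mul_pow, h2]
  have himg : φ '' {z : ℂ | q z = φ z ^ 2 ∧ z.re < 0 ∧ 0 < (g z).re ∧ q z = (z - (x : ℂ)) ^ 2 * g z} ∈ 𝓝 (0 : ℂ) := by
    rw [← hmap]; exact Filter.image_mem_map hU
  obtain ⟨ε, hε, hball⟩ := Metric.mem_nhds_iff.mp himg
  have hs0 : (0 : ℝ) < ε / 2 := by linarith
  have hwmem : Complex.I * ((ε / 2 : ℝ) : ℂ) ∈ Metric.ball (0 : ℂ) ε := by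
    simp only [Metric.mem_ball, dist_zero_right, norm_mul, Complex.norm_I, one_mul,
      Complex.norm_real, Real.norm_eq_abs, abs_of_pos hs0]
    linarith
  obtain ⟨z, ⟨hqz, hzre, hgz, hfac⟩, hφz⟩ := hball hwmem
  have hqval : q z = -(((ε / 2) ^ 2 : ℝ) : ℂ) := by
    rw [hqz, hφz]
    push_cast
    rw [mul_pow, Complex.I_sq]
    ring
  have hz0 : z ≠ 0 := fun h => by simp [h] at hzre
  have hqne : q z ≠ 0 := by
    rw [hqval]
    simp only [ne_eq, neg_eq_zero]
    exact_mod_cast pow_ne_zero 2 (ne_of_gt hs0)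
  have him : (q z).im = 0 := by
    rw [hqval, Complex.neg_im, Complex.ofReal_im, neg_zero]
  have hrle : (q z).re ≤ 0 := by
    rw [hqval, Complex.neg_re, Complex.ofReal_re]
    exact neg_nonpos.mpr (sq_nonneg _)
  have hzim : z.im = 0 := hneg z hz0 hqne him hrle
  have hzeq : z = ((z.re : ℝ) : ℂ) := Complex.ext (by simp) (by simp [hzim])
  have hzx : z - (x : ℂ) = ((z.re - x : ℝ) : ℂ) := by
    apply Complex.ext <;> simp [hzim]
  have hq2 : q z = (((z.re - x : ℝ) : ℂ)) ^ 2 * g z := by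
    rw [hfac, hzx]
  have hrecomp : (q z).re = (z.re - x) ^ 2 * (g z).re := by
    rw [hq2, ← Complex.ofReal_pow, Complex.re_ofReal_mul]
  have hpos : 0 ≤ (q z).re := by
    rw [hrecomp]
    positivity
  rw [hqval] at hpos
  simp only [Complex.neg_re, Complex.ofReal_re] at hpos
  nlinarith

/-- a real function F, holomorphic on ℂ \ {0}, taking nonpositive
real values only at nonpositive real points, and such that z/F(z) has the same
property, cannot have a zero of multiplicity exactly two at a negative point x;
hence all negative zeros of such F are simple. -/
theorem stmt_17 (F : ℂ → ℂ)
    (hF : DifferentiableOn ℂ F {z : ℂ | z ≠ 0})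
    (hreal : ∀ z : ℂ, z ≠ 0 → F ((starRingEnd ℂ) z) = (starRingEnd ℂ) (F z))
    (hFneg : ∀ z : ℂ, z ≠ 0 → (F z).im = 0 → (F z).re ≤ 0 →
      z.im = 0 ∧ z.re ≤ 0)
    (hGneg : ∀ z : ℂ, z ≠ 0 → F z ≠ 0 → (z / F z).im = 0 → (z / F z).re ≤ 0 →
      z.im = 0 ∧ z.re ≤ 0)
    (x : ℝ) (hx : x < 0)
    (h0 : F (x : ℂ) = 0) (h1 : deriv F (x : ℂ) = 0)
    (h2 : iteratedDeriv 2 F (x : ℂ) ≠ 0) :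
    False := by
  have hxne : (x : ℂ) ≠ 0 := Complex.ofReal_ne_zero.mpr hx.ne
  have hFan : AnalyticAt ℂ F (x : ℂ) := hF.analyticAt (isOpen_ne.mem_nhds hxne)
  obtain ⟨p, hp⟩ := hFan
  have hp1 : HasFPowerSeriesAt (dslope F (x : ℂ)) p.fslope (x : ℂ) :=
    hp.has_fpower_series_dslope_fslope
  set g : ℂ → ℂ := dslope (dslope F (x : ℂ)) (x : ℂ) with hg_def
  have hp2 : HasFPowerSeriesAt g p.fslope.fslope (x : ℂ) :=
    hp1.has_fpower_series_dslope_fslope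
  have hg : AnalyticAt ℂ g (x : ℂ) := ⟨_, hp2⟩
  have hf1 : ∀ z : ℂ, F z = (z - (x : ℂ)) * dslope F (x : ℂ) z := by
    intro z
    by_cases hzx : z = (x : ℂ)
    · simp [hzx, h0]
    · rw [dslope_of_ne _ hzx, slope_def_field, h0, sub_zero]
      field_simp [sub_ne_zero.mpr hzx]
  have hd1 : dslope F (x : ℂ) (x : ℂ) = 0 := by rw [dslope_same, h1]
  have hf2 : ∀ z : ℂ, dslope F (x : ℂ) z = (z - (x : ℂ)) * g z := by
    intro z
    by_cases hzx : z = (x : ℂ)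
    · simp [hzx, hd1, h1]
    · have hgz : g z = (dslope F (x : ℂ) z - 0) / (z - (x : ℂ)) := by
        rw [hg_def, dslope_of_ne _ hzx, slope_def_field, hd1]
      rw [hgz, sub_zero]
      field_simp [sub_ne_zero.mpr hzx]
  have hkey : ∀ z : ℂ, F z = (z - (x : ℂ)) ^ 2 * g z := by
    intro z; rw [hf1 z, hf2 z]; ring
  -- g x in terms of the second derivative
  have h4 : p.coeff 2 = g (x : ℂ) := by
    have h5 : p.fslope.fslope.coeff 0 = g (x : ℂ) := hp2.coeff_zero 1
    rwa [FormalMultilinearSeries.coeff_fslope, FormalMultilinearSeries.coeff_fslope] at h5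
  have hiter : iteratedDeriv 2 F (x : ℂ) = 2 * g (x : ℂ) := by
    obtain ⟨r, hball⟩ := hp
    have ha : Nat.factorial 2 • p 2 (fun _ => (1 : ℂ)) = iteratedFDeriv ℂ 2 F (x : ℂ) (fun _ => 1) :=
      hball.factorial_smul 1 2
    have hb : iteratedDeriv 2 F (x : ℂ) = iteratedFDeriv ℂ 2 F (x : ℂ) (fun _ => 1) :=
      iteratedDeriv_eq_iteratedFDeriv
    have hc : p 2 (fun _ => (1 : ℂ)) = p.coeff 2 := rfl
    rw [hb, ← ha, hc, h4]
    simp [Nat.factorial, nsmul_eq_mul]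
  have hgne : g (x : ℂ) ≠ 0 := by
    intro h
    rw [hiter, h, mul_zero] at h2
    exact h2 rfl
  -- g x is real
  have hFreal : ∀ y : ℝ, (y : ℂ) ≠ 0 → (F (y : ℂ)).im = 0 := by
    intro y hy
    have h := hreal (y : ℂ) hy
    rw [Complex.conj_ofReal] at h
    exact Complex.conj_eq_iff_im.mp h.symm
  have him0 : ∀ y : ℝ, y ≠ x → y ≠ 0 → (g (y : ℂ)).im = 0 := by
    intro y hyx hy0
    have h := hkey (y : ℂ)
    have hcast : ((y : ℂ) - (x : ℂ)) ^ 2 = (((y - x) ^ 2 : ℝ) : ℂ) := by push_cast; ring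
    rw [hcast] at h
    have him := hFreal y (Complex.ofReal_ne_zero.mpr hy0)
    rw [h, Complex.im_ofReal_mul] at him
    have hne : ((y - x) ^ 2 : ℝ) ≠ 0 := pow_ne_zero 2 (sub_ne_zero.mpr hyx)
    exact (mul_eq_zero.mp him).resolve_left hne
  have hgim : (g (x : ℂ)).im = 0 := by
    have hcont : ContinuousAt (fun y : ℝ => (g (y : ℂ)).im) x :=
      Complex.continuous_im.continuousAt.comp
        (hg.continuousAt.comp Complex.continuous_ofReal.continuousAt)
    have ht : Tendsto (fun y : ℝ => (g (y : ℂ)).im) (𝓝[≠] x) (𝓝 ((g (x : ℂ)).im)) :=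
      hcont.tendsto.mono_left nhdsWithin_le_nhds
    have hev : (fun y : ℝ => (g (y : ℂ)).im) =ᶠ[𝓝[≠] x] fun _ => 0 := by
      filter_upwards [eventually_ne_nhdsWithin hx.ne, self_mem_nhdsWithin] with y h1' h2'
      exact him0 y h2' h1'
    exact tendsto_nhds_unique (ht.congr' hev) tendsto_const_nhds
  rcases lt_trichotomy ((g (x : ℂ)).re) 0 with hneg | hzero | hpos
  · -- q = F z / z case
    set g₁ : ℂ → ℂ := fun z => g z / z with hg1_def
    have hg₁ : AnalyticAt ℂ g₁ (x : ℂ) := hg.div analyticAt_id hxne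
    have hpos' : 0 < (g₁ (x : ℂ)).re := by
      have : (g₁ (x : ℂ)).re = (g (x : ℂ)).re / x := by
        rw [hg1_def]; exact Complex.div_ofReal_re _ _
      rw [this]
      exact div_pos_iff.mpr (Or.inr ⟨hneg, hx⟩)
    have heq : ∀ᶠ z in 𝓝 (x : ℂ), F z / z = (z - (x : ℂ)) ^ 2 * g₁ z := by
      filter_upwards [eventually_ne_nhds hxne] with z hz
      rw [hkey z, hg1_def, mul_div_assoc]
    refine key_lemma (fun z => F z / z) g₁ x hx hg₁ hpos' heq ?_
    intro z hz0 hqne him hre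
    have hFz : F z ≠ 0 := fun h => hqne (by simp [h])
    have hq : F z / z = (((F z / z).re : ℝ) : ℂ) := Complex.ext (by simp) (by simp [him])
    have hzF : z / F z = ((((F z / z).re)⁻¹ : ℝ) : ℂ) := by
      calc z / F z = (F z / z)⁻¹ := (inv_div _ _).symm
        _ = ((((F z / z).re : ℝ) : ℂ))⁻¹ := by rw [← hq]
        _ = ((((F z / z).re)⁻¹ : ℝ) : ℂ) := (Complex.ofReal_inv _).symm
    refine (hGneg z hz0 hFz ?_ ?_).1
    · rw [hzF]; simp
    · rw [hzF, Complex.ofReal_re]; exact inv_nonpos.mpr hre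
  · exact hgne (Complex.ext hzero hgim)
  · refine key_lemma F g x hx hg hpos (Filter.Eventually.of_forall hkey) ?_
    intro z hz0 _ him hre
    exact (hFneg z hz0 him hre).1
end

section
/- Let z ∈ ℂ with 0 ≤ arg z < π/M (M ≥ 2 an integer) and let ratios ρ_{m,n}(z) := z^{m−n}·p_m(z^M)/p_n(z^M) for 0 ≤ n < m < M satisfy (m−n)·arg z − π < arg ρ_{m,n}(z) ≤ (m−n)·arg z. Then the equation Σ_{n=1}^{M−1} z^n p_n(z^M)/p_0(z^M) = −1 has no solution: i.e., f(z) = Σ_{n=0}^{M−1} z^n p_n(z^M) ≠ 0 whenever p_0(z^M) ≠ 0 and the argument inequalities hold. -/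
open Complex Real

private lemma stmt19_angle_eq {a b : ℝ} (h : (a : Real.Angle) = (b : Real.Angle))
    (h2 : |a - b| < 2 * π) : a = b := by
  rw [Real.Angle.angle_eq_iff_two_pi_dvd_sub] at h
  obtain ⟨k, hk⟩ := h
  have hπ : (0:ℝ) < π := Real.pi_pos
  have hk0 : k = 0 := by
    by_contra hk0
    have : (1:ℝ) ≤ |(k:ℝ)| := by
      have : 1 ≤ |k| := Int.one_le_abs hk0
      exact_mod_cast this
    have habs : |a - b| = 2 * π * |(k:ℝ)| := by
      rw [hk, abs_mul, abs_mul]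
      rw [abs_of_pos (by norm_num : (0:ℝ) < 2), abs_of_pos hπ]
    nlinarith
  rw [hk0] at hk
  push_cast at hk
  linarith

/-- if 0 ≤ arg z < π/M and the ratios
ρ_{m,n}(z) = z^{m−n} p_m(z^M)/p_n(z^M) satisfy
(m−n)·arg z − π < arg ρ_{m,n}(z) ≤ (m−n)·arg z for all 0 ≤ n < m < M, then
f(z) = Σ_{n<M} z^n p_n(z^M) does not vanish (given p_0(z^M) ≠ 0). -/
theorem stmt_19 (M : ℕ) (hM : 2 ≤ M) (p : ℕ → ℂ → ℂ) (z : ℂ)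
    (harg : 0 ≤ z.arg ∧ z.arg < π / M)
    (hp0 : p 0 (z ^ M) ≠ 0)
    (hineq : ∀ n m : ℕ, n < m → m < M →
      ((m - n : ℕ) : ℝ) * z.arg - π
          < (z ^ (m - n) * p m (z ^ M) / p n (z ^ M)).arg ∧
        (z ^ (m - n) * p m (z ^ M) / p n (z ^ M)).arg
          ≤ ((m - n : ℕ) : ℝ) * z.arg) :
    ∑ n ∈ Finset.range M, z ^ n * p n (z ^ M) ≠ 0 := by
  obtain ⟨ht0, htM⟩ := harg
  have hπ : (0:ℝ) < π := Real.pi_pos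
  by_cases hz : z = 0
  · subst hz
    rw [Finset.sum_eq_single 0]
    · simpa using hp0
    · intro n _ hn0
      simp [zero_pow hn0]
    · intro h
      exact absurd (Finset.mem_range.mpr (by omega)) h
  -- Notation
  set t := z.arg with htdef
  have hMpos : (0:ℝ) < M := by positivity
  -- (M-1) * t < π
  have hMt : ((M:ℝ) - 1) * t < π := by
    have h1 : ((M:ℝ) - 1) * t ≤ ((M:ℝ) - 1) * (π / M) := by
      apply mul_le_mul_of_nonneg_left htM.le
      have : (1:ℝ) ≤ (M:ℝ) := by exact_mod_cast Nat.one_le_of_lt hM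
      linarith
    have h2 : ((M:ℝ) - 1) * (π / M) < π := by
      rw [sub_mul, one_mul]
      have : 0 < π / M := by positivity
      have hMM : (M:ℝ) * (π / M) = π := by field_simp
      nlinarith
    linarith
  set w : ℕ → ℂ := fun n => z ^ n * p n (z ^ M) / p 0 (z ^ M) with hw
  have hw0 : w 0 = 1 := by simp [hw, hp0]
  set θ : ℕ → ℝ := fun n => (w n).arg with hθ
  have hθ0 : θ 0 = 0 := by simp [hθ, hw0]
  -- upper/lower bounds on θ n:
  have hub : ∀ n : ℕ, n < M → (n:ℝ) * t - π < θ n ∧ θ n ≤ (n:ℝ) * t := by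
    intro n hn
    rcases Nat.eq_zero_or_pos n with rfl | hn0
    · rw [hθ0]; simp; positivity
    · have := hineq 0 n hn0 hn
      simp only [Nat.sub_zero] at this
      exact ⟨this.1, this.2⟩
  -- pairwise constraint
  have hpair : ∀ n m : ℕ, n < m → m < M → w n ≠ 0 → w m ≠ 0 →
      ((m - n : ℕ):ℝ) * t - π < θ m - θ n ∧ θ m - θ n ≤ ((m - n : ℕ):ℝ) * t := by
    intro n m hnm hm hwn hwm
    rcases Nat.eq_zero_or_pos n with rfl | hn0
    · have := hub m hm
      rw [hθ0]
      simpa using this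
    · have hn : n < M := hnm.trans hm
      have hpn : p n (z ^ M) ≠ 0 := by
        intro h; apply hwn; simp [hw, h]
      have hratio : w m / w n = z ^ (m - n) * p m (z ^ M) / p n (z ^ M) := by
        have hzpow : z ^ m = z ^ (m - n) * z ^ n := by
          rw [← pow_add, Nat.sub_add_cancel hnm.le]
        simp only [hw]
        rw [hzpow]
        field_simp
      have hangle : ((w m / w n).arg : Real.Angle) = ((θ m - θ n : ℝ) : Real.Angle) := by
        rw [Complex.arg_div_coe_angle hwm hwn]
        rfl
      have hkey := hineq n m hnm hm
      rw [← hratio] at hkey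
      have hcast : ((m - n : ℕ):ℝ) = (m:ℝ) - (n:ℝ) := by
        exact_mod_cast Nat.cast_sub hnm.le
      have hubm := hub m hm
      have hubn := hub n hn
      have heq : (w m / w n).arg = θ m - θ n := by
        apply stmt19_angle_eq hangle
        rw [abs_lt]
        constructor
        · -- arg - (θm - θn) > -2π
          have : θ m - θ n < ((m:ℝ) - n) * t + π := by nlinarith [hubm.2, hubn.1]
          have h2 : ((m:ℝ) - n) * t - π < (w m / w n).arg := by rw [← hcast]; exact hkey.1
          linarith
        · have : ((m:ℝ) - n) * t - π < θ m - θ n := by nlinarith [hubm.1, hubn.2]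
          have h2 : (w m / w n).arg ≤ ((m:ℝ) - n) * t := by rw [← hcast]; exact hkey.2
          linarith
      rw [← heq]
      exact hkey
  -- spread bound
  have hspread : ∀ i j : ℕ, i < M → j < M → w i ≠ 0 → w j ≠ 0 → θ i - θ j < π := by
    intro i j hi hj hwi hwj
    rcases lt_trichotomy i j with h | rfl | h
    · have := (hpair i j h hj hwi hwj).1
      have hd : (0:ℝ) ≤ ((j - i : ℕ):ℝ) * t := by positivity
      linarith
    · linarith
    · have h1 := (hpair j i h hi hwj hwi).2
      have h2 : ((i - j : ℕ):ℝ) * t ≤ ((M:ℝ) - 1) * t := by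
        apply mul_le_mul_of_nonneg_right _ ht0
        have : (i - j : ℕ) ≤ M - 1 := by omega
        have hc : ((i - j : ℕ):ℝ) ≤ ((M - 1 : ℕ):ℝ) := Nat.cast_le.mpr this
        have hM1 : ((M - 1 : ℕ):ℝ) = (M:ℝ) - 1 := by
          have : (1:ℕ) ≤ M := by omega
          push_cast [Nat.cast_sub this]
          ring
        rw [hM1] at hc
        linarith
      linarith
  -- set of nonvanishing indices
  set S : Finset ℕ := (Finset.range M).filter (fun n => w n ≠ 0) with hS
  have h0S : 0 ∈ S := by
    rw [hS, Finset.mem_filter]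
    exact ⟨Finset.mem_range.mpr (by omega), by rw [hw0]; exact one_ne_zero⟩
  have hSne : S.Nonempty := ⟨0, h0S⟩
  set A : Finset ℝ := S.image θ with hA
  have hAne : A.Nonempty := hSne.image θ
  set mx := A.max' hAne with hmx
  set mn := A.min' hAne with hmn
  obtain ⟨i, hiS, hiθ⟩ := Finset.mem_image.mp (A.max'_mem hAne)
  obtain ⟨j, hjS, hjθ⟩ := Finset.mem_image.mp (A.min'_mem hAne)
  have hiM : i < M := Finset.mem_range.mp (Finset.mem_filter.mp hiS).1
  have hjM : j < M := Finset.mem_range.mp (Finset.mem_filter.mp hjS).1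
  have hwi : w i ≠ 0 := (Finset.mem_filter.mp hiS).2
  have hwj : w j ≠ 0 := (Finset.mem_filter.mp hjS).2
  have hmxmn : mx - mn < π := by
    rw [hmx, hmn, ← hiθ, ← hjθ]
    exact hspread i j hiM hjM hwi hwj
  have hmnmx : mn ≤ mx := A.min'_le _ (A.max'_mem hAne)
  set ψ : ℝ := (mx + mn) / 2 with hψ
  -- positivity of rotated real parts
  have hterm : ∀ n : ℕ, n ∈ S → 0 < (w n * Complex.exp ((-ψ : ℝ) * Complex.I)).re := by
    intro n hnS
    have hwn : w n ≠ 0 := (Finset.mem_filter.mp hnS).2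
    have hθmem : mn ≤ θ n ∧ θ n ≤ mx := by
      constructor
      · exact A.min'_le (θ n) (Finset.mem_image_of_mem θ hnS)
      · exact A.le_max' (θ n) (Finset.mem_image_of_mem θ hnS)
    have h1 : w n * Complex.exp ((-ψ : ℝ) * Complex.I)
        = ((‖w n‖ : ℝ) : ℂ) * Complex.exp ((θ n - ψ : ℝ) * Complex.I) := by
      conv_lhs => rw [← Complex.norm_mul_exp_arg_mul_I (w n)]
      rw [mul_assoc, ← Complex.exp_add]
      congr 2
      push_cast
      ring
    rw [h1, Complex.re_ofReal_mul, Complex.exp_ofReal_mul_I_re]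
    apply mul_pos
    · exact (norm_pos_iff.mpr hwn)
    · apply Real.cos_pos_of_mem_Ioo
      constructor
      · simp only [hψ]
        linarith [hθmem.1]
      · simp only [hψ]
        linarith [hθmem.2]
  -- the sum of w's is nonzero
  have hwsum : ∑ n ∈ Finset.range M, w n ≠ 0 := by
    intro hcontra
    have hre : 0 < ((∑ n ∈ Finset.range M, w n) * Complex.exp ((-ψ : ℝ) * Complex.I)).re := by
      rw [Finset.sum_mul, Complex.re_sum]
      apply Finset.sum_pos' _ ⟨0, Finset.mem_range.mpr (by omega), hterm 0 h0S⟩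
      intro n hn
      by_cases hwn : w n = 0
      · simp [hwn]
      · exact le_of_lt (hterm n (Finset.mem_filter.mpr ⟨hn, hwn⟩))
    rw [hcontra] at hre
    simp at hre
  -- conclude
  have hsum : ∑ n ∈ Finset.range M, z ^ n * p n (z ^ M)
      = p 0 (z ^ M) * ∑ n ∈ Finset.range M, w n := by
    rw [Finset.mul_sum]
    apply Finset.sum_congr rfl
    intro n _
    simp only [hw]
    field_simp
  rw [hsum]
  exact mul_ne_zero hp0 hwsum
end
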